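/- The 5-dimensional nilpotent commutative associative algebra A₀₈ degenerates to A₁₆: the structure λ of A₁₆ lies in the closure of the GL(5,ℂ)-orbit O(μ) of the structure μ of A₀₈ (closure in the standard topology on the space of bilinear maps ℂ⁵ × ℂ⁵ → ℂ⁵). -/

import Mathlib

open ContinuousLinearMap

/-- The underlying space `ℂⁿ`. -/
abbrev Vn (n : ℕ) := Fin n → ℂ

/-- The space of bilinear maps `ℂⁿ × ℂⁿ → ℂⁿ` (as continuous linear maps in two
arguments), carrying its standard topology as a finite-dimensional complex vector space. -/
abbrev Bil (n : ℕ) := Vn n →L[ℂ] Vn n →L[ℂ] Vn n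

/-- The action of `GL(n, ℂ)` on bilinear maps: `(g · μ)(x, y) = g (μ (g⁻¹ x) (g⁻¹ y))`. -/
noncomputable def act {n : ℕ} (g : Vn n ≃L[ℂ] Vn n) (μ : Bil n) : Bil n :=
  ((compL ℂ (Vn n) (Vn n) (Vn n)).flip (g.symm : Vn n →L[ℂ] Vn n)).comp
    (((compL ℂ (Vn n) (Vn n) (Vn n)) (g : Vn n →L[ℂ] Vn n)).comp
      (μ.comp (g.symm : Vn n →L[ℂ] Vn n)))

@[simp] lemma act_apply {n : ℕ} (g : Vn n ≃L[ℂ] Vn n) (μ : Bil n) (x y : Vn n) :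
    act g μ x y = g (μ (g.symm x) (g.symm y)) := rfl

/-- The orbit `O(μ)` of a bilinear map under the `GL(n, ℂ)`-action. -/
noncomputable def orbit {n : ℕ} (μ : Bil n) : Set (Bil n) :=
  {ν | ∃ g : Vn n ≃L[ℂ] Vn n, ν = act g μ}

/-- The standard basis `e₁, …, e₅` of `ℂ⁵` (zero-indexed: `e i` is `e_{i+1}`). -/
def e (i : Fin 5) : Vn 5 := Pi.single i 1

/-- Multiplication table of the algebra `𝐀08` (entry `(i, j)` is `eᵢ · eⱼ`). -/
def tblA08 : Fin 5 → Fin 5 → Vn 5 :=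
  ![![e 2, e 4, e 3, 0, 0],
   ![e 4, e 3, 0, 0, 0],
   ![e 3, 0, 0, 0, 0],
   ![0, 0, 0, 0, 0],
   ![0, 0, 0, 0, 0]]

/-- Multiplication table of the algebra `𝐀16` (entry `(i, j)` is `eᵢ · eⱼ`). -/
def tblA16 : Fin 5 → Fin 5 → Vn 5 :=
  ![![e 2, e 3, 0, 0, 0],
   ![e 3, e 4, 0, 0, 0],
   ![0, 0, 0, 0, 0],
   ![0, 0, 0, 0, 0],
   ![0, 0, 0, 0, 0]]

/-! Rescale the basis of `𝐀08` to `t e₁, e₂, t² e₃, t e₅, e₄`. In the new basis all products of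
`𝐀08` agree with those of `𝐀16` except `e₁ · e₃ = t³ e₅`, so the orbit of `𝐀08` contains the
curve `λ + t³ • perturbation` for `t ≠ 0`, whose limit at `t = 0` is `λ`. -/

lemma Bil.ext_single {n : ℕ} {ν ν' : Bil n}
    (h : ∀ i j, ν (Pi.single i 1) (Pi.single j 1) = ν' (Pi.single i 1) (Pi.single j 1)) :
    ν = ν' := by
  refine coe_injective ((Pi.basisFun ℂ (Fin n)).ext fun i => ?_)
  refine coe_injective ((Pi.basisFun ℂ (Fin n)).ext fun j => ?_)
  simpa using h i j

lemma act_eq_iff {n : ℕ} (g : Vn n ≃L[ℂ] Vn n) (μ ν : Bil n) :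
    act g μ = ν ↔ ∀ i j, μ (g.symm (Pi.single i 1)) (g.symm (Pi.single j 1)) =
      g.symm (ν (Pi.single i 1) (Pi.single j 1)) := by
  refine ⟨fun h i j => ?_, fun h => Bil.ext_single fun i j => ?_⟩
  · rw [← h, act_apply, ContinuousLinearEquiv.symm_apply_apply]
  · rw [act_apply, h, ContinuousLinearEquiv.apply_symm_apply]

lemma mem_closure_of_add_pow_smul_mem {E : Type*} [AddCommGroup E] [Module ℂ E]
    [TopologicalSpace E] [IsTopologicalAddGroup E] [ContinuousSMul ℂ E] {s : Set E} {ν D : E}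
    {k : ℕ} (hk : k ≠ 0) (h : ∀ t : ℂ, t ≠ 0 → ν + t ^ k • D ∈ s) : ν ∈ closure s := by
  have hcurve : Continuous fun t : ℂ => ν + t ^ k • D := by fun_prop
  simpa [hk] using
    mem_closure_of_tendsto (hcurve.continuousWithinAt (s := {0}ᶜ) (x := 0)).tendsto
      (eventually_nhdsWithin_of_forall h)

lemma e_apply (i k : Fin 5) : e i k = if k = i then 1 else 0 := Pi.single_apply _ _ _

noncomputable def rescale (t : ℂ) (ht : t ≠ 0) : Vn 5 ≃L[ℂ] Vn 5 :=
  LinearEquiv.toContinuousLinearEquiv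
    { toFun x := ![t * x 0, x 1, t ^ 2 * x 2, x 4, t * x 3]
      invFun x := ![t⁻¹ * x 0, x 1, (t ^ 2)⁻¹ * x 2, t⁻¹ * x 4, x 3]
      map_add' x y := by funext k; fin_cases k <;> simp <;> ring
      map_smul' c x := by funext k; fin_cases k <;> simp <;> ring
      left_inv x := by funext k; fin_cases k <;> simp [ht]
      right_inv x := by funext k; fin_cases k <;> simp [ht] }

lemma rescale_e (t : ℂ) (ht : t ≠ 0) (i : Fin 5) :
    rescale t ht (e i) = ![t • e 0, e 1, t ^ 2 • e 2, t • e 4, e 3] i := by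
  funext k; fin_cases i <;> fin_cases k <;> simp [rescale, e_apply]

noncomputable def perturbation : Bil 5 :=
  (proj 0).smulRight ((proj 2).smulRight (e 4)) + (proj 2).smulRight ((proj 0).smulRight (e 4))

lemma perturbation_apply (x y : Vn 5) : perturbation x y = (x 0 * y 2 + x 2 * y 0) • e 4 := by
  simp [perturbation, add_smul, smul_smul, mul_comm]

lemma act_rescale_symm (μ lam : Bil 5)
    (hμ : ∀ i j : Fin 5, μ (e i) (e j) = tblA08 i j)
    (hlam : ∀ i j : Fin 5, lam (e i) (e j) = tblA16 i j) (t : ℂ) (ht : t ≠ 0) :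
    act (rescale t ht).symm μ = lam + t ^ 3 • perturbation := by
  refine (act_eq_iff _ _ _).2 fun i j => ?_
  change μ (rescale t ht (e i)) (rescale t ht (e j)) =
    rescale t ht (lam (e i) (e j) + t ^ 3 • perturbation (e i) (e j))
  fin_cases i <;> fin_cases j <;>
    simp [rescale_e, hμ, hlam, tblA08, tblA16, perturbation_apply, e_apply, smul_smul, ← sq,
      ← pow_succ, ← pow_succ']

/-- The $5$-dimensional nilpotent commutative associative algebra `𝐀08` degenerates to
`𝐀16`: the structure `λ` of `𝐀16` lies in the closure of
the `GL(5, ℂ)`-orbit `O(μ)` of the structure `μ` of `𝐀08`. -/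
theorem A08_deg_A16 (μ lam : Bil 5)
    (hμ : ∀ i j : Fin 5, μ (e i) (e j) = tblA08 i j)
    (hlam : ∀ i j : Fin 5, lam (e i) (e j) = tblA16 i j) :
    lam ∈ closure (orbit μ) :=
  mem_closure_of_add_pow_smul_mem three_ne_zero fun t ht =>
    ⟨(rescale t ht).symm, (act_rescale_symm μ lam hμ hlam t ht).symm⟩
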